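/- arXiv:2308.08604 — 4 statements merged into one kernel-verified Lean document; each statement's English description precedes it below -/
import Mathlib

section
/- Let I = ⟨x_1^{a_1}, x_2^{a_2}, …, x_t^{a_t}⟩ ⊆ S = K[x_1,…,x_t] with all a_i ≥ 1. Then for every i ∈ {1,…,t} and every n ≥ 1, the colon ideal satisfies (I^{n+1} : x_i^{a_i}) = I^n. -/
open MvPolynomial

noncomputable section

/-- The `v`-number of a graded ideal `I ⊆ K[x_1,…,x_t]`: the least `k ≥ 0` such that there is a
homogeneous polynomial `f` of degree `k` with `(I : f)` an associated prime of `S/I`. -/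
def vNumber {σ K : Type*} [Field K] (I : Ideal (MvPolynomial σ K)) : ℕ :=
  sInf {k : ℕ | ∃ f : MvPolynomial σ K, f.IsHomogeneous k ∧
    Submodule.colon I (Ideal.span {f}) ∈
      associatedPrimes (MvPolynomial σ K) (MvPolynomial σ K ⧸ I)}

/-- The edge ideal of a simple graph: generated by `x_i * x_j` for edges `{x_i, x_j}`. -/
def edgeIdeal (K : Type*) [Field K] {V : Type*} (G : SimpleGraph V) :
    Ideal (MvPolynomial V K) :=
  Ideal.span {m | ∃ i j, G.Adj i j ∧ m = X i * X j}

/-- `I` is a monomial ideal: generated by a set of monomials. -/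
def IsMonomialIdeal {σ K : Type*} [Field K] (I : Ideal (MvPolynomial σ K)) : Prop :=
  ∃ A : Set (σ →₀ ℕ), I = Ideal.span ((fun a => (monomial a (1 : K))) '' A)

/-- The graded maximal ideal `𝔪 = ⟨x_1,…,x_t⟩`. -/
def maxIdeal (K : Type*) [Field K] (σ : Type*) : Ideal (MvPolynomial σ K) :=
  Ideal.span (Set.range (X : σ → MvPolynomial σ K))

/-- `α(I)`: the minimum degree of a nonzero element of `I`. -/
def alphaNumber {σ K : Type*} [Field K] (I : Ideal (MvPolynomial σ K)) : ℕ :=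
  sInf {d : ℕ | ∃ f ∈ I, f ≠ 0 ∧ f.totalDegree = d}

/-- Exponent vectors of the minimal monomial generators of a monomial ideal `I`:
monomials in `I` none of whose proper divisors lies in `I`. -/
def minimalGenerators {σ K : Type*} [Field K] (I : Ideal (MvPolynomial σ K)) :
    Set (σ →₀ ℕ) :=
  {a | (monomial a (1 : K)) ∈ I ∧
    ∀ b : σ →₀ ℕ, b ≤ a → b ≠ a → (monomial b (1 : K)) ∉ I}

/-!
Write `I = ⟨x_j ^ a_j⟩`. A monomial `x^m` lies in `I^n` exactly when `n ≤ ∑ⱼ ⌊m_j / a_j⌋`: a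
product of `n` generators divides `x^m` iff one can peel off `n` pure powers `x_j ^ a_j` from it
one at a time, and each peel lowers this floor sum by exactly one. Multiplying by `x_i ^ a_i`
raises the floor sum by exactly one, so `(I^(n+1) : x_i ^ a_i)` and `I^n` contain the same
polynomials, monomial ideals being determined by the monomials they contain.
-/

open scoped Pointwise

namespace PurePowers

variable {σ : Type*} (R : Type*) [CommSemiring R]

def ideal (a : σ → ℕ) : Ideal (MvPolynomial σ R) :=
  Ideal.span (Set.range fun j => X j ^ a j)

def exponents (a : σ → ℕ) : Set (σ →₀ ℕ) := Set.range fun j => Finsupp.single j (a j)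

def order [Fintype σ] (a : σ → ℕ) (m : σ →₀ ℕ) : ℕ := ∑ j, m j / a j

lemma ideal_pow_eq_span_monomial (a : σ → ℕ) (n : ℕ) :
    ideal R a ^ n = Ideal.span ((fun d => monomial d (1 : R)) '' (n • exponents a)) := by
  induction n with
  | zero =>
    rw [pow_zero, zero_nsmul, ← Set.singleton_zero, Set.image_singleton, ← one_def,
      Ideal.span_singleton_one, Ideal.one_eq_top]
  | succ n ih =>
    have hgen : ideal R a = Ideal.span ((fun d => monomial d (1 : R)) '' exponents a) := by
      rw [ideal, exponents, ← Set.range_comp]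
      exact congrArg _ (congrArg _ (funext fun j => X_pow_eq_monomial))
    rw [pow_succ, ih, hgen, Ideal.span_mul_span', succ_nsmul, ← Set.image2_mul,
      Set.image2_image_left, Set.image2_image_right, ← Set.image2_add, Set.image_image2]
    simp only [monomial_mul, mul_one]

variable [Fintype σ] {a : σ → ℕ}

lemma order_add_single [DecidableEq σ] {i : σ} (hi : 0 < a i) (m : σ →₀ ℕ) :
    order a (m + Finsupp.single i (a i)) = order a m + 1 := by
  have h : ∀ j, (m + Finsupp.single i (a i)) j / a j = m j / a j + if j = i then 1 else 0 := by
    intro j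
    by_cases hj : j = i
    · subst hj; simp [Nat.add_div_right _ hi]
    · simp [hj]
  rw [order, order, Finset.sum_congr rfl fun j _ => h j, Finset.sum_add_distrib,
    Finset.sum_ite_eq' Finset.univ, if_pos (Finset.mem_univ i)]

lemma exists_mem_nsmul_le_iff (ha : ∀ j, 0 < a j) (n : ℕ) (m : σ →₀ ℕ) :
    (∃ d ∈ n • exponents a, d ≤ m) ↔ n ≤ order a m := by
  classical
  induction n generalizing m with
  | zero => simp [Set.mem_zero]
  | succ n ih =>
    simp only [succ_nsmul, Set.mem_add, exponents, Set.mem_range]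
    constructor
    · rintro ⟨_, ⟨d, hd, _, ⟨j, rfl⟩, rfl⟩, hle⟩
      obtain ⟨m', rfl⟩ := le_iff_exists_add'.1 (le_add_self.trans hle)
      rw [order_add_single (ha j), add_le_add_iff_right, ← ih]
      exact ⟨d, hd, le_of_add_le_add_right hle⟩
    · intro hm
      obtain ⟨j, hj⟩ : ∃ j, a j ≤ m j := by
        by_contra! h
        simp [order, Nat.div_eq_of_lt (h _)] at hm
      obtain ⟨m', rfl⟩ : ∃ m', m = m' + Finsupp.single j (a j) :=
        ⟨m - Finsupp.single j (a j), (tsub_add_cancel_of_le (by simpa using hj)).symm⟩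
      rw [order_add_single (ha j), add_le_add_iff_right, ← ih] at hm
      obtain ⟨d, hd, hle⟩ := hm
      exact ⟨_, ⟨d, hd, _, ⟨j, rfl⟩, rfl⟩, add_le_add_left hle _⟩

variable {R}

lemma mem_ideal_pow_iff (ha : ∀ j, 0 < a j) (n : ℕ) (p : MvPolynomial σ R) :
    p ∈ ideal R a ^ n ↔ ∀ m ∈ p.support, n ≤ order a m := by
  rw [ideal_pow_eq_span_monomial, mem_ideal_span_monomial_image]
  exact forall₂_congr fun m _ => exists_mem_nsmul_le_iff ha n m

theorem colon_ideal_pow_succ (ha : ∀ j, 0 < a j) (i : σ) (n : ℕ) :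
    Submodule.colon (ideal R a ^ (n + 1)) (Ideal.span {(X i : MvPolynomial σ R) ^ a i}) =
      ideal R a ^ n := by
  classical
  refine le_antisymm (fun p hp => ?_) (fun p hp => ?_)
  · rw [Ideal.mem_colon_span_singleton, mem_ideal_pow_iff ha] at hp
    refine (mem_ideal_pow_iff ha n p).2 fun m hm => ?_
    have hshift : m + Finsupp.single i (a i) ∈ (p * X i ^ a i).support := by
      rwa [X_pow_eq_monomial, mem_support_iff, coeff_mul_monomial, mul_one, ← mem_support_iff]
    simpa [order_add_single (ha i)] using hp _ hshift
  · rw [Ideal.mem_colon_span_singleton, pow_succ]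
    exact Ideal.mul_mem_mul hp (Ideal.subset_span ⟨i, rfl⟩)

end PurePowers

/-- for I = ⟨x_1^{a_1},…,x_t^{a_t}⟩, (I^{n+1} : x_i^{a_i}) = I^n. -/
theorem colon_pow_pure_powers {K : Type*} [Field K] (t : ℕ) (a : Fin t → ℕ)
    (ha : ∀ i, 1 ≤ a i) :
    ∀ (i : Fin t) (n : ℕ), 1 ≤ n →
      Submodule.colon
        ((Ideal.span (Set.range fun j => (X j : MvPolynomial (Fin t) K) ^ a j)) ^ (n + 1))
        (Ideal.span {(X i : MvPolynomial (Fin t) K) ^ a i}) =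
      (Ideal.span (Set.range fun j => (X j : MvPolynomial (Fin t) K) ^ a j)) ^ n :=
  fun i n _ => PurePowers.colon_ideal_pow_succ ha i n
end
end

section
/- Let I = ⟨x_1^{a_1}, x_2^{a_2}, …, x_t^{a_t}⟩ ⊆ S = K[x_1,…,x_t] with all a_i ≥ 1. Then v(I^{n+1}) = v(I) + n·α(I) for all n ≥ 1 (here α(I) = min_i a_i). -/
/-!
For an exponent vector `c` put `⌊c/a⌋ = ∑ ⌊c_j/a_j⌋`. Then `x^c ∈ I^m` iff `m ≤ ⌊c/a⌋`, and `I^m`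
is the monomial ideal cut out by this condition. If `(I^{m+1} : g)` is prime, it contains every
`x_i` (a power of `x_i` lies in `I^{m+1}`), so some monomial `x^c` of `g` lies outside `I^{m+1}`
while every `x_i x^c` lies inside. This forces `a_i ∣ c_i + 1` for all `i` and `⌊c/a⌋ = m`, i.e.
`c_i = a_i q_i + a_i - 1` with `∑ q_i = m`, so `deg g = |c| ≥ ∑ (a_i - 1) + m · min a_i`.
Taking `q = m e_k` with `a_k` minimal gives `(I^{m+1} : x^c) = 𝔪`, so
`v(I^{m+1}) = ∑ (a_i - 1) + m · α(I)` for every `m ≥ 0`; the theorem compares `m = n` with `m = 0`.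
-/

open MvPolynomial

noncomputable section

section Colon

variable {R : Type*} [CommSemiring R] {I : Ideal R} {f : R}

lemma colon_span_singleton_eq_top_iff : I.colon (Ideal.span {f}) = ⊤ ↔ f ∈ I := by
  rw [Submodule.colon_eq_top_iff_subset, SetLike.coe_subset_coe, Ideal.span_singleton_le_iff_mem]

lemma notMem_of_isPrime_colon (hP : (I.colon (Ideal.span {f})).IsPrime) : f ∉ I := fun hf =>
  hP.ne_top (colon_span_singleton_eq_top_iff.mpr hf)

lemma mul_mem_of_isPrime_colon (hP : (I.colon (Ideal.span {f})).IsPrime) {x : R} {e : ℕ}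
    (hx : x ^ e ∈ I) : x * f ∈ I :=
  Ideal.mem_colon_span_singleton.mp <| hP.mem_of_pow_mem e <|
    Ideal.mem_colon_span_singleton.mpr (I.mul_mem_right f hx)

lemma colon_mem_associatedPrimes {R : Type*} [CommRing R] {I : Ideal R} {f : R}
    (hP : (I.colon (Ideal.span {f})).IsPrime) :
    I.colon (Ideal.span {f}) ∈ associatedPrimes R (R ⧸ I) := by
  refine ⟨hP, Ideal.Quotient.mk I f, ?_⟩
  have hcolon : Submodule.colon ⊥ {Ideal.Quotient.mk I f} = I.colon (Ideal.span {f}) := by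
    ext r
    rw [Submodule.mem_colon_singleton, Ideal.mem_colon_span_singleton, Submodule.mem_bot,
      Algebra.smul_def, Ideal.Quotient.algebraMap_eq, ← map_mul, Ideal.Quotient.eq_zero_iff_mem]
  rw [hcolon, hP.radical]

end Colon

section MaxIdeal

variable {σ K : Type*} [Field K]

lemma maxIdeal_eq_ker_constantCoeff : maxIdeal K σ = RingHom.ker constantCoeff := by
  ext f
  rw [maxIdeal, ← Set.image_univ, mem_ideal_span_X_image, RingHom.mem_ker, constantCoeff_eq]
  simp only [Set.mem_univ, true_and]
  refine ⟨fun h => ?_, fun h0 m hm => ?_⟩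
  · by_contra h0
    obtain ⟨i, hi⟩ := h 0 (mem_support_iff.mpr h0)
    exact hi rfl
  · by_contra! hm0
    rw [show m = 0 from Finsupp.ext hm0, mem_support_iff] at hm
    exact hm h0

lemma isMaximal_maxIdeal : (maxIdeal K σ).IsMaximal := by
  rw [maxIdeal_eq_ker_constantCoeff]
  exact RingHom.ker_isMaximal_of_surjective _ fun r => ⟨C r, constantCoeff_C σ r⟩

end MaxIdeal

lemma vNumber_eq_zero_of_isPrime {σ K : Type*} [Field K] {I : Ideal (MvPolynomial σ K)}
    (hI : I.IsPrime) : vNumber I = 0 := by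
  have hcolon : I.colon (Ideal.span {(1 : MvPolynomial σ K)}) = I := by
    ext r
    rw [Ideal.mem_colon_span_singleton, mul_one]
  exact Nat.sInf_eq_zero.mpr <| Or.inl
    ⟨1, isHomogeneous_one σ K, colon_mem_associatedPrimes (by rwa [hcolon])⟩

lemma alphaNumber_bot {σ K : Type*} [Field K] : alphaNumber (⊥ : Ideal (MvPolynomial σ K)) = 0 :=
  Nat.sInf_eq_zero.mpr <| Or.inr <| Set.eq_empty_of_forall_notMem fun _ ⟨_, hf, hf0, _⟩ =>
    hf0 (Ideal.mem_bot.mp hf)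

open Finsupp (single)

section FloorWeight

variable {σ : Type*} [Fintype σ]

def floorWeight (a : σ → ℕ) (c : σ →₀ ℕ) : ℕ := ∑ j, c j / a j

lemma floorWeight_mono (a : σ → ℕ) : Monotone (floorWeight a) := fun _ _ h =>
  Finset.sum_le_sum fun j _ => Nat.div_le_div_right (h j)

lemma floorWeight_add_le (a : σ → ℕ) (c d : σ →₀ ℕ) :
    floorWeight a c + floorWeight a d ≤ floorWeight a (c + d) := by
  rw [floorWeight, floorWeight, ← Finset.sum_add_distrib]
  exact Finset.sum_le_sum fun j _ => Nat.div_add_div_le_add_div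

lemma floorWeight_single_add [DecidableEq σ] (a : σ → ℕ) (i : σ) (c : σ →₀ ℕ) :
    floorWeight a (single i 1 + c) = floorWeight a c + if a i ∣ c i + 1 then 1 else 0 := by
  have hterm : ∀ j, (single i 1 + c : σ →₀ ℕ) j / a j =
      c j / a j + if j = i then (if a i ∣ c i + 1 then 1 else 0) else 0 := by
    intro j
    rcases eq_or_ne j i with rfl | hji
    · simp [add_comm 1, Nat.succ_div]
    · simp [hji]
  rw [floorWeight, Finset.sum_congr rfl fun j _ => hterm j, Finset.sum_add_distrib,
    Finset.sum_ite_eq' Finset.univ i, if_pos (Finset.mem_univ i), floorWeight]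

/-- For `∑ q = m` these are exactly the corners of the staircase of `⟨x_j^{a_j}⟩^{m+1}`: exponents
`c` with `x^c` outside the ideal but every `x_i x^c` inside it. -/
def cornerExponent (a q : σ → ℕ) : σ →₀ ℕ :=
  Finsupp.equivFunOnFinite.symm fun j => a j * q j + (a j - 1)

variable {a : σ → ℕ}

lemma degree_cornerExponent (q : σ → ℕ) :
    (cornerExponent a q).degree = ∑ j, a j * q j + ∑ j, (a j - 1) := by
  simp [Finsupp.degree_eq_sum, cornerExponent, Finset.sum_add_distrib]

lemma cornerExponent_div_eq_self {c : σ →₀ ℕ} (h : ∀ j, a j ∣ c j + 1) :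
    cornerExponent a (fun j => c j / a j) = c := by
  ext j
  have hc : (c j + 1) / a j * a j = c j + 1 := Nat.div_mul_cancel (h j)
  rw [Nat.succ_div, if_pos (h j), Nat.add_mul, Nat.one_mul, Nat.mul_comm] at hc
  have ha : 0 < a j := Nat.pos_of_dvd_of_pos (h j) (Nat.succ_pos _)
  simp only [cornerExponent, Finsupp.coe_equivFunOnFinite_symm]
  omega

lemma exists_cornerExponent_eq [Nonempty σ] {m : ℕ} {c : σ →₀ ℕ} (hc : floorWeight a c ≤ m)
    (hX : ∀ i, m + 1 ≤ floorWeight a (single i 1 + c)) :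
    ∃ q : σ → ℕ, ∑ j, q j = m ∧ cornerExponent a q = c := by
  classical
  have hdvd (i : σ) : a i ∣ c i + 1 := by
    by_contra h
    have := hX i
    rw [floorWeight_single_add, if_neg h] at this
    omega
  refine ⟨fun j => c j / a j, le_antisymm hc ?_, cornerExponent_div_eq_self hdvd⟩
  have := hX (Classical.arbitrary σ)
  rw [floorWeight_single_add, if_pos (hdvd _)] at this
  exact Nat.le_of_add_le_add_right this

variable (ha : ∀ j, 1 ≤ a j)
include ha

lemma cornerExponent_div (q : σ → ℕ) (j : σ) : cornerExponent a q j / a j = q j := by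
  simp [cornerExponent, Nat.mul_add_div (ha j), Nat.div_eq_of_lt (Nat.sub_lt (ha j) one_pos)]

lemma dvd_cornerExponent_add_one (q : σ → ℕ) (j : σ) : a j ∣ cornerExponent a q j + 1 := by
  refine ⟨q j + 1, ?_⟩
  have := ha j
  simp only [cornerExponent, Finsupp.coe_equivFunOnFinite_symm]
  rw [Nat.mul_succ]
  omega

lemma floorWeight_cornerExponent (q : σ → ℕ) : floorWeight a (cornerExponent a q) = ∑ j, q j :=
  Finset.sum_congr rfl fun j _ => cornerExponent_div ha q j

lemma floorWeight_single_add_cornerExponent (q : σ → ℕ) (i : σ) :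
    floorWeight a (single i 1 + cornerExponent a q) = ∑ j, q j + 1 := by
  classical
  rw [floorWeight_single_add, if_pos (dvd_cornerExponent_add_one ha q i),
    floorWeight_cornerExponent ha]

end FloorWeight

section PurePowerIdeal

variable {σ R : Type*} [Fintype σ] [CommSemiring R]

variable (R) in
def purePowerIdeal (a : σ → ℕ) : Ideal (MvPolynomial σ R) :=
  Ideal.span (Set.range fun j => X j ^ a j)

variable (R) in
def floorWeightIdeal (a : σ → ℕ) (m : ℕ) : Ideal (MvPolynomial σ R) :=
  restrictSupportIdeal R {c | m ≤ floorWeight a c} fun _ _ hcd hc =>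
    hc.trans (floorWeight_mono a hcd)

variable {a : σ → ℕ}

lemma mem_floorWeightIdeal {m : ℕ} {f : MvPolynomial σ R} :
    f ∈ floorWeightIdeal R a m ↔ ∀ c ∈ f.support, m ≤ floorWeight a c :=
  Iff.rfl

lemma floorWeightIdeal_mul_le (m n : ℕ) :
    floorWeightIdeal R a m * floorWeightIdeal R a n ≤ floorWeightIdeal R a (m + n) := by
  classical
  refine Ideal.mul_le.mpr fun f hf g hg => mem_floorWeightIdeal.mpr fun c hc => ?_
  obtain ⟨u, hu, v, hv, rfl⟩ := Finset.mem_add.mp (support_mul f g hc)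
  exact (add_le_add (mem_floorWeightIdeal.mp hf u hu) (mem_floorWeightIdeal.mp hg v hv)).trans
    (floorWeight_add_le a u v)

lemma purePowerIdeal_le_floorWeightIdeal_one (ha : ∀ j, 1 ≤ a j) :
    purePowerIdeal R a ≤ floorWeightIdeal R a 1 := by
  classical
  refine Ideal.span_le.mpr ?_
  rintro _ ⟨j, rfl⟩
  simp only [X_pow_eq_monomial]
  refine mem_floorWeightIdeal.mpr fun c hc => ?_
  obtain rfl := Finset.mem_singleton.mp (support_monomial_subset hc)
  calc 1 = single j (a j) j / a j := by simp [Nat.div_self (ha j)]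
    _ ≤ floorWeight a (single j (a j)) :=
      Finset.single_le_sum (f := fun i => single j (a j) i / a i) (fun _ _ => Nat.zero_le _)
        (Finset.mem_univ j)

lemma purePowerIdeal_pow_le_floorWeightIdeal (ha : ∀ j, 1 ≤ a j) (m : ℕ) :
    purePowerIdeal R a ^ m ≤ floorWeightIdeal R a m := by
  induction m with
  | zero => exact fun f _ => mem_floorWeightIdeal.mpr fun _ _ => Nat.zero_le _
  | succ m ih =>
    rw [pow_succ]
    exact (Ideal.mul_mono ih (purePowerIdeal_le_floorWeightIdeal_one ha)).trans
      (floorWeightIdeal_mul_le m 1)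

lemma monomial_mem_purePowerIdeal_pow {m : ℕ} {c : σ →₀ ℕ} (hc : m ≤ floorWeight a c) (r : R) :
    monomial c r ∈ purePowerIdeal R a ^ m := by
  have hsplit : monomial c r = (C r * ∏ j, X j ^ (c j % a j)) * ∏ j, (X j ^ a j) ^ (c j / a j) := by
    rw [monomial_eq, Finsupp.prod_fintype _ _ fun _ => pow_zero _, mul_assoc,
      ← Finset.prod_mul_distrib]
    congr 1
    refine Finset.prod_congr rfl fun j _ => ?_
    rw [← pow_mul, ← pow_add, Nat.mod_add_div]
  have hprod : ∏ j, (X j ^ a j) ^ (c j / a j) ∈ purePowerIdeal R a ^ floorWeight a c := by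
    rw [floorWeight, ← Finset.prod_pow_eq_pow_sum]
    exact Ideal.prod_mem_prod fun j _ =>
      Ideal.pow_mem_pow (Ideal.subset_span (Set.mem_range_self j)) _
  rw [hsplit]
  exact Ideal.mul_mem_left _ _ (Ideal.pow_le_pow_right hc hprod)

lemma floorWeightIdeal_le_purePowerIdeal_pow (m : ℕ) :
    floorWeightIdeal R a m ≤ purePowerIdeal R a ^ m := fun f hf => by
  rw [f.as_sum]
  exact Ideal.sum_mem _ fun c hc =>
    monomial_mem_purePowerIdeal_pow (mem_floorWeightIdeal.mp hf c hc) _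

lemma purePowerIdeal_pow_eq_floorWeightIdeal (ha : ∀ j, 1 ≤ a j) (m : ℕ) :
    purePowerIdeal R a ^ m = floorWeightIdeal R a m :=
  le_antisymm (purePowerIdeal_pow_le_floorWeightIdeal ha m)
    (floorWeightIdeal_le_purePowerIdeal_pow m)

lemma exists_corner_mem_support_of_isPrime_colon (ha : ∀ j, 1 ≤ a j) {m : ℕ} {g : MvPolynomial σ R}
    (hP : ((purePowerIdeal R a ^ (m + 1)).colon (Ideal.span {g})).IsPrime) :
    ∃ c ∈ g.support, floorWeight a c ≤ m ∧ ∀ i, m + 1 ≤ floorWeight a (single i 1 + c) := by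
  have hg := notMem_of_isPrime_colon hP
  rw [purePowerIdeal_pow_eq_floorWeightIdeal ha, mem_floorWeightIdeal] at hg
  push Not at hg
  obtain ⟨c, hc, hlt⟩ := hg
  refine ⟨c, hc, Nat.lt_succ_iff.mp hlt, fun i => ?_⟩
  have hXg : X i * g ∈ purePowerIdeal R a ^ (m + 1) := by
    refine mul_mem_of_isPrime_colon hP (e := a i * (m + 1)) ?_
    rw [pow_mul]
    exact Ideal.pow_mem_pow (Ideal.subset_span (Set.mem_range_self i)) _
  rw [purePowerIdeal_pow_eq_floorWeightIdeal ha] at hXg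
  exact mem_floorWeightIdeal.mp hXg _ (by rw [support_X_mul]; exact Finset.mem_map_of_mem _ hc)

end PurePowerIdeal

section VNumber

variable {σ K : Type*} [Fintype σ] [Field K] {a : σ → ℕ}

lemma colon_monomial_eq_maxIdeal (ha : ∀ j, 1 ≤ a j) {m : ℕ} {c : σ →₀ ℕ}
    (hc : floorWeight a c ≤ m) (hX : ∀ i, m + 1 ≤ floorWeight a (single i 1 + c)) :
    (purePowerIdeal K a ^ (m + 1)).colon (Ideal.span {monomial c (1 : K)}) = maxIdeal K σ := by
  refine (isMaximal_maxIdeal.eq_of_le ?_ ?_).symm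
  · rw [Ne, colon_span_singleton_eq_top_iff, purePowerIdeal_pow_eq_floorWeightIdeal ha,
      mem_floorWeightIdeal]
    intro h
    have := h c (by classical simp)
    omega
  · rw [maxIdeal, Ideal.span_le]
    rintro _ ⟨i, rfl⟩
    rw [SetLike.mem_coe, Ideal.mem_colon_span_singleton, ← pow_one (X i), ← monomial_single_add]
    exact monomial_mem_purePowerIdeal_pow (hX i) 1

theorem vNumber_purePowerIdeal_pow_succ [Nonempty σ] (ha : ∀ j, 1 ≤ a j) {k : σ}
    (hk : ∀ j, a k ≤ a j) (m : ℕ) :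
    vNumber (purePowerIdeal K a ^ (m + 1)) = ∑ j, (a j - 1) + m * a k := by
  classical
  refine IsLeast.csInf_eq ⟨?_, ?_⟩
  · set c := cornerExponent a (Pi.single k m)
    have hcolon := colon_monomial_eq_maxIdeal (K := K) ha (c := c) (m := m)
      (by rw [floorWeight_cornerExponent ha]; simp)
      (fun i => by rw [floorWeight_single_add_cornerExponent ha]; simp)
    refine ⟨monomial c 1, isHomogeneous_monomial _ ?_,
      colon_mem_associatedPrimes (hcolon ▸ isMaximal_maxIdeal.isPrime)⟩
    rw [degree_cornerExponent]
    simp [Pi.single_apply, mul_comm, add_comm]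
  · rintro N ⟨g, hg, hP⟩
    obtain ⟨c, hc, hcm, hX⟩ := exists_corner_mem_support_of_isPrime_colon ha hP.isPrime
    obtain ⟨q, rfl, rfl⟩ := exists_cornerExponent_eq hcm hX
    rw [hg.degree_eq_sum_deg_support hc, ← Finsupp.degree_apply, degree_cornerExponent,
      add_comm (∑ j, a j * q j), Finset.sum_mul]
    exact Nat.add_le_add_left (Finset.sum_le_sum fun j _ => by
      rw [mul_comm]; exact Nat.mul_le_mul_right _ (hk j)) _

theorem alphaNumber_purePowerIdeal (ha : ∀ j, 1 ≤ a j) {k : σ} (hk : ∀ j, a k ≤ a j) :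
    alphaNumber (purePowerIdeal K a) = a k := by
  refine IsLeast.csInf_eq ⟨⟨X k ^ a k, Ideal.subset_span ⟨k, rfl⟩, pow_ne_zero _ (X_ne_zero k),
    totalDegree_X_pow k (a k)⟩, ?_⟩
  rintro _ ⟨g, hg, hg0, rfl⟩
  obtain ⟨c, hc⟩ := support_nonempty.mpr hg0
  have hc1 : 1 ≤ floorWeight a c :=
    mem_floorWeightIdeal.mp (purePowerIdeal_le_floorWeightIdeal_one ha hg) c hc
  obtain ⟨j, -, hj⟩ := Finset.exists_ne_zero_of_sum_ne_zero (Nat.one_le_iff_ne_zero.mp hc1)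
  calc a k ≤ a j := hk j
    _ ≤ c j := not_lt.mp fun hlt => hj (Nat.div_eq_of_lt hlt)
    _ ≤ c.degree := Finsupp.le_degree j c
    _ ≤ g.totalDegree := le_totalDegree hc

end VNumber


/-- for I = ⟨x_1^{a_1},…,x_t^{a_t}⟩, v(I^{n+1}) = v(I) + n·α(I) for all n ≥ 1. -/
theorem vNumber_pow_pure_powers {K : Type*} [Field K] (t : ℕ) (a : Fin t → ℕ)
    (ha : ∀ i, 1 ≤ a i) :
    ∀ n, 1 ≤ n →
      vNumber ((Ideal.span (Set.range fun j => (X j : MvPolynomial (Fin t) K) ^ a j)) ^ (n + 1)) =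
        vNumber (Ideal.span (Set.range fun j => (X j : MvPolynomial (Fin t) K) ^ a j)) +
          n * alphaNumber (Ideal.span (Set.range fun j => (X j : MvPolynomial (Fin t) K) ^ a j)) := by
  intro n _
  change vNumber (purePowerIdeal K a ^ (n + 1)) =
    vNumber (purePowerIdeal K a) + n * alphaNumber (purePowerIdeal K a)
  cases isEmpty_or_nonempty (Fin t)
  · have hbot : purePowerIdeal K a = ⊥ := by
      rw [purePowerIdeal, Set.range_eq_empty, Ideal.span_empty]
    rw [hbot, Ideal.bot_pow n.succ_ne_zero, alphaNumber_bot,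
      vNumber_eq_zero_of_isPrime Ideal.isPrime_bot, mul_zero, add_zero]
  · obtain ⟨k, hk⟩ := Finite.exists_min a
    have hv := vNumber_purePowerIdeal_pow_succ (K := K) ha hk 0
    rw [zero_add, pow_one, zero_mul, add_zero] at hv
    rw [vNumber_purePowerIdeal_pow_succ ha hk, hv, alphaNumber_purePowerIdeal ha hk]
end
end

section
/- Let G be a finite simple graph with at least one edge and let I = I(G) be its edge ideal. Then v(I^{n+1}) ≤ 2n + v(I) for all n ≥ 1. -/
open MvPolynomial

noncomputable section

/-!
Choose a homogeneous `f` of degree `v(I)` with `P = (I : f)` prime; one exists because a maximal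
member of the family of colon ideals `(I : g)`, `g ∉ I` homogeneous, is a homogeneous prime.
The variables lying in `P` form a vertex cover of `G`; a minimal vertex cover `D` inside it has an
edge `x_u x_b` with `u ∈ D` and `b ∉ D`. Weighting the variables of `D` by one, every monomial of
`I^{n+1}` has weight at least `n + 1` while `(x_u x_b)^n` has weight `n`, so
`p (x_u x_b)^n f ∈ I^{n+1}` forces `p f ∈ (x_i : i ∈ D) ⊆ P`. Since `I` is radical, `f ∉ P`, hence
`p ∈ P`. Thus `(I^{n+1} : (x_u x_b)^n f) = P`, and `(x_u x_b)^n f` has degree `2n + v(I)`.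
-/

section Colon

variable {R : Type*} [CommRing R] {I : Ideal R} {f : R}

theorem Ideal.colon_span_singleton_mem_associatedPrimes
    (hP : (I.colon (Ideal.span {f})).IsPrime) :
    I.colon (Ideal.span {f}) ∈ associatedPrimes R (R ⧸ I) := by
  refine ⟨hP, Ideal.Quotient.mk I f, ?_⟩
  have : (⊥ : Submodule R (R ⧸ I)).colon {Ideal.Quotient.mk I f} = I.colon (Ideal.span {f}) := by
    ext r
    rw [Submodule.mem_colon_singleton, Ideal.mem_colon_span_singleton, Submodule.mem_bot,
      Algebra.smul_def, Ideal.Quotient.algebraMap_eq, ← map_mul, Ideal.Quotient.eq_zero_iff_mem]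
  rw [this, hP.radical]

theorem Ideal.IsRadical.notMem_colon_span_singleton_self (hI : I.IsRadical)
    (htop : I.colon (Ideal.span {f}) ≠ ⊤) : f ∉ I.colon (Ideal.span {f}) := by
  intro hf
  rw [Ideal.mem_colon_span_singleton, ← sq] at hf
  apply htop
  rw [Ideal.eq_top_iff_one, Ideal.mem_colon_span_singleton, one_mul]
  exact hI ⟨2, hf⟩

theorem Ideal.colon_pow_succ_span_pow_mul_eq {e : R} (n : ℕ) (he : e ∈ I)
    (hP : (I.colon (Ideal.span {f})).IsPrime) (hf : f ∉ I.colon (Ideal.span {f}))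
    (hle : (I ^ (n + 1)).colon (Ideal.span {e ^ n}) ≤ I.colon (Ideal.span {f})) :
    (I ^ (n + 1)).colon (Ideal.span {e ^ n * f}) = I.colon (Ideal.span {f}) := by
  ext r
  constructor
  · intro hr
    rw [Ideal.mem_colon_span_singleton, ← mul_assoc, mul_right_comm] at hr
    exact (hP.mem_or_mem (hle (Ideal.mem_colon_span_singleton.2 hr))).resolve_right hf
  · intro hr
    rw [Ideal.mem_colon_span_singleton] at hr ⊢
    rw [pow_succ, mul_left_comm]
    exact Ideal.mul_mem_mul (Ideal.pow_mem_pow he n) hr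

end Colon

section Graded

open SetLike DirectSum

variable {ι A σ : Type*} [CommRing A] [AddCancelCommMonoid ι] [LinearOrder ι] [SetLike σ A]
  [AddSubmonoidClass σ A] {𝒜 : ι → σ} [GradedRing 𝒜] {I : Ideal A}

theorem Ideal.IsHomogeneous.colon_span_singleton (hI : I.IsHomogeneous 𝒜) {f : A}
    (hf : IsHomogeneousElem 𝒜 f) : (I.colon (Ideal.span {f})).IsHomogeneous 𝒜 := by
  obtain ⟨j, hj⟩ := hf
  intro i r hr
  rw [Ideal.mem_colon_span_singleton] at hr ⊢
  rw [← coe_decompose_mul_add_of_right_mem 𝒜 hj]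
  exact hI (i + j) hr

theorem Ideal.IsHomogeneous.exists_isPrime_colon_span_singleton [IsOrderedCancelAddMonoid ι]
    [IsNoetherianRing A] (hI : I.IsHomogeneous 𝒜) (htop : I ≠ ⊤) :
    ∃ f, IsHomogeneousElem 𝒜 f ∧ (I.colon (Ideal.span {f})).IsPrime := by
  obtain ⟨_, ⟨f, hf, hfI, rfl⟩, hmax⟩ := set_has_maximal_iff_noetherian.mpr ‹_›
    {J | ∃ f, IsHomogeneousElem 𝒜 f ∧ f ∉ I ∧ J = I.colon (Ideal.span {f})}
    ⟨_, 1, isHomogeneousElem_one 𝒜, (I.ne_top_iff_one).1 htop, rfl⟩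
  refine ⟨f, hf, (hI.colon_span_singleton hf).isPrime_of_homogeneous_mem_or_mem ?_ ?_⟩
  · rwa [Ne, Ideal.eq_top_iff_one, Ideal.mem_colon_span_singleton, one_mul]
  · intro x y _ hy hxy
    by_contra! ⟨hx, hyf⟩
    rw [Ideal.mem_colon_span_singleton] at hyf
    have hle : I.colon (Ideal.span {f}) ≤ I.colon (Ideal.span {y * f}) := fun r hr => by
      rw [Ideal.mem_colon_span_singleton] at hr ⊢
      rw [mul_left_comm]
      exact I.mul_mem_left y hr
    rw [hle.eq_of_not_lt (hmax _ ⟨y * f, hy.mul hf, hyf, rfl⟩), Ideal.mem_colon_span_singleton,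
      ← mul_assoc] at hx
    exact hx (Ideal.mem_colon_span_singleton.1 hxy)

end Graded

section MonomialIdeal

open Pointwise

variable {σ R : Type*} [CommRing R]

theorem MvPolynomial.span_monomial_image_pow (A : Set (σ →₀ ℕ)) (m : ℕ) :
    Ideal.span ((fun a => monomial a (1 : R)) '' A) ^ m =
      Ideal.span ((fun a => monomial a (1 : R)) '' (m • A)) := by
  induction m with
  | zero => simp
  | succ m ih =>
    rw [pow_succ, ih, Ideal.span_mul_span', succ_nsmul]
    congr 1
    ext x
    simp [Set.mem_mul, Set.mem_add, monomial_mul]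

theorem MvPolynomial.exists_add_mem_span_monomial_image (A : Set (σ →₀ ℕ))
    (f : MvPolynomial σ R) :
    ∃ g h, f = g + h ∧ h ∈ Ideal.span ((fun a => monomial a (1 : R)) '' A) ∧
      ∀ ν ∈ g.support, ∀ a ∈ A, ¬a ≤ ν := by
  induction f using MvPolynomial.induction_on' with
  | monomial ν c =>
    by_cases hν : ∃ a ∈ A, a ≤ ν
    · refine ⟨0, monomial ν c, (zero_add _).symm, ?_, by simp⟩
      rw [mem_ideal_span_monomial_image]
      intro μ hμ
      rwa [Finset.mem_singleton.1 (support_monomial_subset hμ)]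
    · refine ⟨monomial ν c, 0, (add_zero _).symm, zero_mem _, fun μ hμ a ha haμ => ?_⟩
      rw [Finset.mem_singleton.1 (support_monomial_subset hμ)] at haμ
      exact hν ⟨a, ha, haμ⟩
  | add p q hp hq =>
    obtain ⟨g₁, h₁, rfl, hh₁, hg₁⟩ := hp
    obtain ⟨g₂, h₂, rfl, hh₂, hg₂⟩ := hq
    classical
    refine ⟨g₁ + g₂, h₁ + h₂, by abel, add_mem hh₁ hh₂, fun ν hν => ?_⟩
    rcases Finset.mem_union.1 (support_add hν) with h | h
    exacts [hg₁ ν h, hg₂ ν h]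

theorem MvPolynomial.isRadical_span_monomial_image [IsDomain R] {A : Set (σ →₀ ℕ)}
    (hA : ∀ a ∈ A, ∀ i, a i ≤ 1) :
    (Ideal.span ((fun a => monomial a (1 : R)) '' A)).IsRadical := by
  set J := Ideal.span ((fun a => monomial a (1 : R)) '' A)
  rw [Ideal.isRadical_iff_pow_one_lt 2 one_lt_two]
  intro f hf
  obtain ⟨g, h, rfl, hh, hg⟩ := exists_add_mem_span_monomial_image A f
  suffices g = 0 by rwa [this, zero_add]
  by_contra hg0
  have hgg : g * g ∈ J := by
    have : g * g = (g + h) ^ 2 - h * (2 * g + h) := by ring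
    rw [this]
    exact J.sub_mem hf (J.mul_mem_right _ hh)
  obtain ⟨_, _⟩ := exists_wellFoundedGT σ
  let m := MonomialOrder.lex (σ := σ)
  have hdeg : m.degree g + m.degree g ∈ (g * g).support := by
    rw [← m.degree_mul hg0 hg0, m.degree_mem_support_iff]
    exact mul_ne_zero hg0 hg0
  obtain ⟨a, ha, hle⟩ := mem_ideal_span_monomial_image.1 hgg _ hdeg
  -- `a` is squarefree and divides the square of the leading monomial of `g`, hence that monomial
  refine hg _ ((m.degree_mem_support_iff g).2 hg0) a ha fun i => ?_
  have := hA a ha i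
  have := hle i
  simp only [Finsupp.add_apply] at this
  omega

end MonomialIdeal

section VNumber

variable {σ K : Type*} [Field K] {I : Ideal (MvPolynomial σ K)}

theorem vNumber_le {f : MvPolynomial σ K} {k : ℕ} (hf : f.IsHomogeneous k)
    (hP : (I.colon (Ideal.span {f})).IsPrime) : vNumber I ≤ k :=
  Nat.sInf_le ⟨f, hf, Ideal.colon_span_singleton_mem_associatedPrimes hP⟩

attribute [local instance] MvPolynomial.gradedAlgebra in
theorem exists_isHomogeneous_vNumber_isPrime_colon [Finite σ]
    (hI : I.IsHomogeneous (homogeneousSubmodule σ K)) (htop : I ≠ ⊤) :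
    ∃ f : MvPolynomial σ K, f.IsHomogeneous (vNumber I) ∧ (I.colon (Ideal.span {f})).IsPrime := by
  obtain ⟨f, ⟨k, hk⟩, hP⟩ := hI.exists_isPrime_colon_span_singleton htop
  obtain ⟨g, hg, hgP⟩ : vNumber I ∈ {k : ℕ | ∃ f : MvPolynomial σ K, f.IsHomogeneous k ∧
      I.colon (Ideal.span {f}) ∈ associatedPrimes _ (MvPolynomial σ K ⧸ I)} :=
    Nat.sInf_mem ⟨k, f, (mem_homogeneousSubmodule k f).1 hk,
      Ideal.colon_span_singleton_mem_associatedPrimes hP⟩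
  exact ⟨g, hg, hgP.1⟩

end VNumber

namespace SimpleGraph

variable {V : Type*} {G : SimpleGraph V} {D : Set V}

theorem exists_adj_notMem_of_minimal_isVertexCover (hD : Minimal G.IsVertexCover D) {u : V}
    (hu : u ∈ D) : ∃ b, G.Adj u b ∧ b ∉ D := by
  by_contra! h
  have hcover : G.IsVertexCover (D \ {u}) := by
    intro v w hvw
    rcases hD.1 hvw with hv | hw
    · by_cases hvu : v = u
      · subst hvu
        exact .inr ⟨h w hvw, hvw.ne'⟩
      · exact .inl ⟨hv, hvu⟩
    · by_cases hwu : w = u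
      · subst hwu
        exact .inl ⟨h v hvw.symm, hvw.ne⟩
      · exact .inr ⟨hw, hwu⟩
  exact (hD.2 hcover Set.sdiff_subset hu).2 rfl

theorem exists_adj_mem_notMem_of_minimal_isVertexCover (hD : Minimal G.IsVertexCover D)
    {x y : V} (hxy : G.Adj x y) : ∃ u b, G.Adj u b ∧ u ∈ D ∧ b ∉ D := by
  rcases hD.1 hxy with hx | hy
  · obtain ⟨b, hxb, hb⟩ := exists_adj_notMem_of_minimal_isVertexCover hD hx
    exact ⟨x, b, hxb, hx, hb⟩
  · obtain ⟨b, hyb, hb⟩ := exists_adj_notMem_of_minimal_isVertexCover hD hy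
    exact ⟨y, b, hyb, hy, hb⟩

end SimpleGraph

section EdgeIdeal

open Pointwise

variable {K V : Type*} [Field K] (G : SimpleGraph V)

def edgeExponents : Set (V →₀ ℕ) :=
  {a | ∃ i j, G.Adj i j ∧ a = Finsupp.single i 1 + Finsupp.single j 1}

theorem edgeIdeal_eq_span_monomial_image :
    edgeIdeal K G = Ideal.span ((fun a => monomial a (1 : K)) '' edgeExponents G) := by
  unfold edgeIdeal
  congr 1
  ext m
  simp [edgeExponents, X, monomial_mul, eq_comm]

theorem edgeIdeal_isRadical : (edgeIdeal K G).IsRadical := by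
  rw [edgeIdeal_eq_span_monomial_image]
  refine isRadical_span_monomial_image ?_
  rintro _ ⟨i, j, hij, rfl⟩ k
  classical
  rw [Finsupp.add_apply, Finsupp.single_apply, Finsupp.single_apply]
  split_ifs with hi hj
  · exact absurd (hi.trans hj.symm) hij.ne
  all_goals omega

theorem edgeIdeal_ne_top : edgeIdeal K G ≠ ⊤ := by
  refine ne_top_of_le_ne_top (RingHom.ker_ne_top (constantCoeff : MvPolynomial V K →+* K))
    (Ideal.span_le.2 ?_)
  rintro _ ⟨i, j, -, rfl⟩
  simp

attribute [local instance] MvPolynomial.gradedAlgebra in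
theorem edgeIdeal_isHomogeneous : (edgeIdeal K G).IsHomogeneous (homogeneousSubmodule V K) := by
  refine Ideal.homogeneous_span _ _ ?_
  rintro _ ⟨i, j, -, rfl⟩
  exact ⟨2, (mem_homogeneousSubmodule _ _).2 ((isHomogeneous_X K i).mul (isHomogeneous_X K j))⟩

theorem isVertexCover_setOf_X_mem {P : Ideal (MvPolynomial V K)} [P.IsPrime]
    (hP : edgeIdeal K G ≤ P) : G.IsVertexCover {i | X i ∈ P} :=
  fun _ _ hij => Ideal.IsPrime.mem_or_mem ‹_› (hP (Ideal.subset_span ⟨_, _, hij, rfl⟩))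

theorem le_weight_of_mem_nsmul_edgeExponents {C : Set V} (hC : G.IsVertexCover C) (m : ℕ)
    {c : V →₀ ℕ} (hc : c ∈ m • edgeExponents G) : m ≤ Finsupp.weight (C.indicator 1) c := by
  induction m generalizing c with
  | zero => exact Nat.zero_le _
  | succ m ih =>
    rw [succ_nsmul] at hc
    obtain ⟨a, ha, _, ⟨i, j, hij, rfl⟩, rfl⟩ := hc
    have := ih ha
    rcases hC hij with h | h <;> simp [Finsupp.weight_single, h] <;> omega

theorem mem_span_X_of_mul_pow_mem_edgeIdeal_pow {C : Set V} (hC : G.IsVertexCover C) {u b : V}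
    (hu : u ∈ C) (hb : b ∉ C) {n : ℕ} {p : MvPolynomial V K}
    (hp : p * (X u * X b) ^ n ∈ edgeIdeal K G ^ (n + 1)) : p ∈ Ideal.span (X '' C) := by
  set M : V →₀ ℕ := Finsupp.single u 1 + Finsupp.single b 1
  have hM : (X u * X b : MvPolynomial V K) ^ n = monomial (n • M) 1 := by
    simp [M, X, monomial_mul, monomial_pow]
  rw [edgeIdeal_eq_span_monomial_image, span_monomial_image_pow, hM,
    mem_ideal_span_monomial_image] at hp
  rw [mem_ideal_span_X_image]
  intro ν hν
  obtain ⟨c, hc, hcν⟩ := hp (ν + n • M)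
    (by rw [mem_support_iff, coeff_mul_monomial, mul_one]; exact mem_support_iff.1 hν)
  have hwc := le_weight_of_mem_nsmul_edgeExponents G hC (n + 1) hc
  set w : (V →₀ ℕ) →+ ℕ := Finsupp.weight (C.indicator 1)
  have hwM : w M = 1 := by simp [M, w, Finsupp.weight_single, hu, hb]
  obtain ⟨d, hd⟩ := exists_add_of_le hcν
  have hwν : w ν ≠ 0 := by
    have := congrArg w hd
    simp only [map_add, map_nsmul, hwM, smul_eq_mul, mul_one] at this
    omega
  by_contra! h
  refine hwν (Finset.sum_eq_zero fun i _ => ?_)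
  by_cases hi : i ∈ C <;> simp [hi, h i]

end EdgeIdeal

/-- for the edge ideal I of a graph, v(I^{n+1}) ≤ 2n + v(I) for all n ≥ 1. -/
theorem vNumber_pow_edgeIdeal_le {K : Type*} [Field K] {V : Type*} [Fintype V]
    (G : SimpleGraph V) (hedge : ∃ u v, G.Adj u v) :
    ∀ n, 1 ≤ n → vNumber ((edgeIdeal K G) ^ (n + 1)) ≤ 2 * n + vNumber (edgeIdeal K G) := by
  intro n _
  obtain ⟨x, y, hxy⟩ := hedge
  obtain ⟨f, hf, hP⟩ := exists_isHomogeneous_vNumber_isPrime_colon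
    (edgeIdeal_isHomogeneous (K := K) G) (edgeIdeal_ne_top G)
  have hIP : edgeIdeal K G ≤ (edgeIdeal K G).colon (Ideal.span {f}) := Ideal.le_colon
  obtain ⟨D, hDP, hD⟩ :=
    exists_minimal_le_of_wellFoundedLT G.IsVertexCover _ (isVertexCover_setOf_X_mem G hIP)
  obtain ⟨u, b, hub, hu, hb⟩ := SimpleGraph.exists_adj_mem_notMem_of_minimal_isVertexCover hD hxy
  have hDP' : Ideal.span (X '' D) ≤ (edgeIdeal K G).colon (Ideal.span {f}) :=
    Ideal.span_le.2 (Set.image_subset_iff.2 hDP)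
  have hcolon : (edgeIdeal K G ^ (n + 1)).colon (Ideal.span {(X u * X b) ^ n * f}) =
      (edgeIdeal K G).colon (Ideal.span {f}) :=
    Ideal.colon_pow_succ_span_pow_mul_eq n (Ideal.subset_span ⟨u, b, hub, rfl⟩) hP
      ((edgeIdeal_isRadical G).notMem_colon_span_singleton_self hP.ne_top) fun p hp =>
        hDP' (mem_span_X_of_mul_pow_mem_edgeIdeal_pow G hD.1 hu hb
          (Ideal.mem_colon_span_singleton.1 hp))
  have hdeg : ((X u * X b) ^ n * f).IsHomogeneous (2 * n + vNumber (edgeIdeal K G)) := by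
    have := (((isHomogeneous_X K u).mul (isHomogeneous_X K b)).pow n).mul hf
    rwa [show (1 + 1) * n = 2 * n by ring] at this
  exact vNumber_le hdeg (hcolon ▸ hP)
end
end

section
/- Let G be a finite simple graph with at least one edge whose edge ideal I = I(G) satisfies v(I) = 1. Then v(I^{n+1}) = 2n + 1 for all n ≥ 1. -/
open MvPolynomial

noncomputable section

/-!
Let `(I : g)` be prime with `g` linear and `x_w` a term of `g`. An edge `ab` gives
`x_a x_b ∈ (I : g)`, say `x_a g ∈ I`; as `I` is a monomial ideal, `x_a x_w ∈ I`, i.e. `a ~ w`.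
So the neighbourhood `N(w)` is a vertex cover.

Weight a monomial by the number of its variables lying in `N(w)`. Every edge has weight `≥ 1`,
so `I^(n+1)` lives in weight `≥ n + 1`, whereas `x_w^(n+1) x_y^n` (with `y ~ w`) has weight `n`.
Hence `(I^(n+1) : x_w^(n+1) x_y^n) = (x_j : j ∈ N(w))`, a prime, and `v(I^(n+1)) ≤ 2n + 1`.

Conversely a prime `(I^(n+1) : f)` contains `I`, hence a variable `x_u`, and then `x_u f` is a
nonzero element of `I^(n+1)`, all of whose monomials have degree `≥ 2n + 2`.
-/

lemma Finsupp.weight_mono {σ : Type*} (ω : σ → ℕ) :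
    Monotone (Finsupp.weight ω : (σ →₀ ℕ) → ℕ) := by
  intro μ ν h
  obtain ⟨c, rfl⟩ := exists_add_of_le h
  simp

namespace MvPolynomial

open Finsupp

section Weight

variable {σ R : Type*} [CommSemiring R]

variable (R) in
def weightGeIdeal (ω : σ → ℕ) (d : ℕ) : Ideal (MvPolynomial σ R) :=
  restrictSupportIdeal R {μ | d ≤ weight ω μ} fun _ _ hle h =>
    h.trans (Finsupp.weight_mono ω hle)

variable {ω : σ → ℕ} {d e : ℕ} {p : MvPolynomial σ R}

lemma mem_weightGeIdeal : p ∈ weightGeIdeal R ω d ↔ ∀ μ ∈ p.support, d ≤ weight ω μ :=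
  Iff.rfl

lemma monomial_one_mem_weightGeIdeal [Nontrivial R] {μ : σ →₀ ℕ} :
    monomial μ (1 : R) ∈ weightGeIdeal R ω d ↔ d ≤ weight ω μ :=
  Iff.trans (monomial_mem_restrictSupport R) (or_iff_left one_ne_zero)

lemma weightGeIdeal_mul_le :
    weightGeIdeal R ω d * weightGeIdeal R ω e ≤ weightGeIdeal R ω (d + e) := by
  classical
  refine Ideal.mul_le.2 fun p hp q hq => mem_weightGeIdeal.2 fun μ hμ => ?_
  obtain ⟨α, hα, β, hβ, rfl⟩ := Finset.mem_add.1 (support_mul p q hμ)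
  rw [map_add]
  exact add_le_add (mem_weightGeIdeal.1 hp α hα) (mem_weightGeIdeal.1 hq β hβ)

lemma pow_le_weightGeIdeal {I : Ideal (MvPolynomial σ R)} (h : I ≤ weightGeIdeal R ω d) (m : ℕ) :
    I ^ m ≤ weightGeIdeal R ω (m * d) := by
  induction m with
  | zero => exact fun p _ => mem_weightGeIdeal.2 fun μ _ => by simp
  | succ m ih =>
    rw [pow_succ, add_one_mul]
    exact (Ideal.mul_mono ih h).trans weightGeIdeal_mul_le

lemma mem_weightGeIdeal_of_mul_monomial_mem {a : σ →₀ ℕ}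
    (h : p * monomial a 1 ∈ weightGeIdeal R ω (d + weight ω a)) : p ∈ weightGeIdeal R ω d := by
  refine mem_weightGeIdeal.2 fun μ hμ => ?_
  have hμa : μ + a ∈ (p * monomial a 1).support := by
    rwa [mem_support_iff, coeff_mul_monomial, mul_one, ← mem_support_iff]
  have := mem_weightGeIdeal.1 h _ hμa
  rw [map_add] at this
  omega

lemma weightGeIdeal_indicator_one_le (C : Set σ) :
    weightGeIdeal R (C.indicator 1) 1 ≤ Ideal.span (X '' C) := by
  intro p hp
  refine mem_ideal_span_X_image.2 fun μ hμ => ?_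
  by_contra! hC
  have hzero : weight (C.indicator 1) μ = 0 :=
    Finset.sum_eq_zero fun j _ => by by_cases hj : j ∈ C <;> simp [hj, hC]
  have := mem_weightGeIdeal.1 hp μ hμ
  omega

end Weight

lemma isPrime_span_X_image {σ R : Type*} [CommRing R] [IsDomain R] (C : Set σ) :
    (Ideal.span (X '' C : Set (MvPolynomial σ R))).IsPrime := by
  classical
  set J := Ideal.span (X '' C : Set (MvPolynomial σ R))
  -- `φ` kills the variables in `C` and is the identity modulo `J`, so `J = ker φ`.
  let φ : MvPolynomial σ R →ₐ[R] MvPolynomial σ R := aeval fun j => if j ∈ C then 0 else X j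
  have hφ : (Ideal.Quotient.mkₐ R J).comp φ = Ideal.Quotient.mkₐ R J := by
    refine algHom_ext fun j => ?_
    by_cases hj : j ∈ C
    · simpa [φ, hj, eq_comm (a := (0 : MvPolynomial σ R ⧸ J)), Ideal.Quotient.eq_zero_iff_mem]
        using Ideal.subset_span (Set.mem_image_of_mem X hj)
    · simp [φ, hj]
  have hJ : J = RingHom.ker φ := by
    refine le_antisymm (Ideal.span_le.2 ?_) fun p hp => ?_
    · rintro _ ⟨j, hj, rfl⟩
      simp [φ, hj]
    · have hp' : Ideal.Quotient.mk J (φ p) = Ideal.Quotient.mk J p := congr($hφ p)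
      rwa [(RingHom.mem_ker).1 hp, map_zero, eq_comm, Ideal.Quotient.eq_zero_iff_mem] at hp'
  rw [hJ]
  exact RingHom.ker_isPrime _

lemma IsHomogeneous.exists_coeff_single_ne_zero {σ R : Type*} [CommSemiring R]
    {g : MvPolynomial σ R} (hg : g.IsHomogeneous 1) (h0 : g ≠ 0) :
    ∃ w, coeff (single w 1) g ≠ 0 := by
  obtain ⟨μ, hμ⟩ := support_nonempty.2 h0
  have hdeg : μ ∈ {d : σ →₀ ℕ | d.degree = 1} := by
    rw [Set.mem_ofPred_eq, degree_eq_weight_one]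
    exact hg (mem_support_iff.1 hμ)
  rw [← range_single_one] at hdeg
  obtain ⟨w, rfl⟩ := hdeg
  exact ⟨w, mem_support_iff.1 hμ⟩

end MvPolynomial

lemma IsMonomialIdeal.monomial_mem_of_mem_support {σ K : Type*} [Field K]
    {I : Ideal (MvPolynomial σ K)} (hI : IsMonomialIdeal I) {p : MvPolynomial σ K}
    (hp : p ∈ I) {μ : σ →₀ ℕ} (hμ : μ ∈ p.support) : monomial μ 1 ∈ I := by
  obtain ⟨A, rfl⟩ := hI
  rw [mem_ideal_span_monomial_image] at hp ⊢
  intro ν hν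
  rw [Finset.mem_singleton.1 (support_monomial_subset hν)]
  exact hp μ hμ

section AssociatedPrimes

variable {R : Type*} [CommRing R] {I : Ideal R} {f : R}

lemma colon_span_singleton_mem_associatedPrimes_iff :
    Submodule.colon I (Ideal.span {f}) ∈ associatedPrimes R (R ⧸ I) ↔
      (Submodule.colon I (Ideal.span {f})).IsPrime := by
  refine ⟨IsAssociatedPrime.isPrime, fun h => ⟨h, Ideal.Quotient.mk I f, ?_⟩⟩
  have : Submodule.colon (⊥ : Submodule R (R ⧸ I)) {Ideal.Quotient.mk I f} =
      Submodule.colon I (Ideal.span {f}) := by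
    ext r
    rw [Submodule.mem_colon_singleton, Submodule.mem_bot, Ideal.mem_colon_span_singleton,
      Algebra.smul_def, Ideal.Quotient.algebraMap_eq, ← map_mul, Ideal.Quotient.eq_zero_iff_mem]
  rw [this, h.radical]

lemma ne_zero_of_isPrime_colon (h : (Submodule.colon I (Ideal.span {f})).IsPrime) : f ≠ 0 := by
  rintro rfl
  refine h.ne_top ((Ideal.eq_top_iff_one _).2 ?_)
  rw [Ideal.mem_colon_span_singleton, mul_zero]
  exact I.zero_mem

end AssociatedPrimes

section VNumber

variable {σ K : Type*} [Field K] {I : Ideal (MvPolynomial σ K)}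

-- `sInf ∅ = 0`, so a nonzero v-number is attained.
lemma exists_isHomogeneous_vNumber (h : vNumber I ≠ 0) :
    ∃ f : MvPolynomial σ K, f.IsHomogeneous (vNumber I) ∧
      Submodule.colon I (Ideal.span {f}) ∈
        associatedPrimes (MvPolynomial σ K) (MvPolynomial σ K ⧸ I) :=
  Nat.sInf_mem (Nat.nonempty_of_pos_sInf (Nat.pos_of_ne_zero h))

lemma vNumber_eq_of_forall_le {k : ℕ} (f : MvPolynomial σ K) (hf : f.IsHomogeneous k)
    (hfI : Submodule.colon I (Ideal.span {f}) ∈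
      associatedPrimes (MvPolynomial σ K) (MvPolynomial σ K ⧸ I))
    (hle : ∀ j (g : MvPolynomial σ K), g.IsHomogeneous j → Submodule.colon I (Ideal.span {g}) ∈
      associatedPrimes (MvPolynomial σ K) (MvPolynomial σ K ⧸ I) → k ≤ j) :
    vNumber I = k :=
  IsLeast.csInf_eq ⟨⟨f, hf, hfI⟩, fun j ⟨g, hg, hgI⟩ => hle j g hg hgI⟩

end VNumber

section EdgeIdeal

open Finsupp

variable {K : Type*} [Field K] {V : Type*} (G : SimpleGraph V) {i j w : V}

lemma X_mul_X_mem_edgeIdeal (h : G.Adj i j) : X i * X j ∈ edgeIdeal K G :=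
  Ideal.subset_span ⟨i, j, h, rfl⟩

lemma edgeIdeal_eq_span_monomial : edgeIdeal K G = Ideal.span ((fun μ => monomial μ (1 : K)) ''
    {μ | ∃ i j, G.Adj i j ∧ μ = single i 1 + single j 1}) := by
  unfold edgeIdeal
  congr 1
  ext p
  simp [X, monomial_mul, eq_comm]

lemma isMonomialIdeal_edgeIdeal : IsMonomialIdeal (edgeIdeal K G) :=
  ⟨_, edgeIdeal_eq_span_monomial G⟩

lemma X_mul_X_mem_edgeIdeal_iff : X i * X j ∈ edgeIdeal K G ↔ G.Adj i j := by
  classical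
  refine ⟨fun h => ?_, X_mul_X_mem_edgeIdeal G⟩
  rw [edgeIdeal_eq_span_monomial, mem_ideal_span_monomial_image] at h
  have hmon : (X i * X j : MvPolynomial V K) = monomial (single i 1 + single j 1) 1 := by
    simp [X, monomial_mul]
  obtain ⟨_, ⟨a, b, hab, rfl⟩, hle⟩ :=
    h (single i 1 + single j 1) (by simp [hmon, coeff_monomial])
  obtain ⟨c, hc⟩ := exists_add_of_le hle
  have hc0 : c = 0 := by
    have := congr(degree $hc)
    simp only [map_add, degree_single] at this
    rwa [left_eq_add, degree_eq_zero_iff] at this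
  rw [hc0, add_zero, single_add_single_eq_single_add_single one_ne_zero one_ne_zero] at hc
  rcases hc with ⟨rfl, rfl⟩ | ⟨-, rfl, rfl⟩ | ⟨h, -⟩
  · exact hab
  · exact hab.symm
  · simp at h

lemma adj_of_X_mul_mem_edgeIdeal {g : MvPolynomial V K} {a : V}
    (hg : coeff (single w 1) g ≠ 0) (h : X a * g ∈ edgeIdeal K G) : G.Adj a w := by
  have hμ : single a 1 + single w 1 ∈ (X a * g).support := by
    rwa [MvPolynomial.mem_support_iff, coeff_X_mul]
  have := (isMonomialIdeal_edgeIdeal G).monomial_mem_of_mem_support h hμ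
  rwa [← one_mul (1 : K), ← monomial_mul, ← X, ← X, X_mul_X_mem_edgeIdeal_iff] at this

lemma isVertexCover_neighborSet_of_isPrime_colon {g : MvPolynomial V K}
    (hP : (Submodule.colon (edgeIdeal K G) (Ideal.span {g})).IsPrime)
    (hg : coeff (single w 1) g ≠ 0) : G.IsVertexCover (G.neighborSet w) := by
  intro a b hab
  have hedge : X a * X b ∈ Submodule.colon (edgeIdeal K G) (Ideal.span {g}) :=
    Ideal.le_colon (X_mul_X_mem_edgeIdeal G hab)
  simp only [SimpleGraph.mem_neighborSet]
  rcases hP.mem_or_mem hedge with ha | hb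
  · exact .inl (adj_of_X_mul_mem_edgeIdeal G hg (Ideal.mem_colon_span_singleton.1 ha)).symm
  · exact .inr (adj_of_X_mul_mem_edgeIdeal G hg (Ideal.mem_colon_span_singleton.1 hb)).symm

lemma edgeIdeal_le_weightGeIdeal {ω : V → ℕ} {d : ℕ} (h : ∀ i j, G.Adj i j → d ≤ ω i + ω j) :
    edgeIdeal K G ≤ weightGeIdeal K ω d := by
  rw [edgeIdeal_eq_span_monomial, Ideal.span_le]
  rintro _ ⟨_, ⟨i, j, hij, rfl⟩, rfl⟩
  simpa [monomial_one_mem_weightGeIdeal, weight_single] using h i j hij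

lemma two_mul_le_of_isHomogeneous_mem_edgeIdeal_pow {m k : ℕ} {p : MvPolynomial V K}
    (hp : p ∈ edgeIdeal K G ^ m) (hhom : p.IsHomogeneous k) (h0 : p ≠ 0) : 2 * m ≤ k := by
  have hle : edgeIdeal K G ≤ weightGeIdeal K 1 2 :=
    edgeIdeal_le_weightGeIdeal G fun _ _ _ => le_rfl
  obtain ⟨μ, hμ⟩ := support_nonempty.2 h0
  rw [mul_comm, ← hhom (MvPolynomial.mem_support_iff.1 hμ)]
  exact mem_weightGeIdeal.1 (pow_le_weightGeIdeal hle m hp) μ hμ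

lemma two_mul_le_of_isPrime_colon_edgeIdeal_pow {a b : V} (hab : G.Adj a b) {m k : ℕ}
    {f : MvPolynomial V K} (hf : f.IsHomogeneous k)
    (hP : (Submodule.colon (edgeIdeal K G ^ m) (Ideal.span {f})).IsPrime) : 2 * m ≤ k + 1 := by
  have hedge : (X a * X b) ^ m ∈ Submodule.colon (edgeIdeal K G ^ m) (Ideal.span {f}) :=
    Ideal.le_colon (Ideal.pow_mem_pow (X_mul_X_mem_edgeIdeal G hab) m)
  obtain ⟨u, hu⟩ : ∃ u, X u ∈ Submodule.colon (edgeIdeal K G ^ m) (Ideal.span {f}) :=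
    (hP.mem_or_mem (hP.mem_of_pow_mem m hedge)).elim (⟨a, ·⟩) (⟨b, ·⟩)
  rw [Ideal.mem_colon_span_singleton] at hu
  exact two_mul_le_of_isHomogeneous_mem_edgeIdeal_pow G hu
    (add_comm k 1 ▸ (isHomogeneous_X K u).mul hf)
    (mul_ne_zero (X_ne_zero u) (ne_zero_of_isPrime_colon hP))

lemma colon_edgeIdeal_pow_X_pow_mul_X_pow {y : V} (hcover : G.IsVertexCover (G.neighborSet w))
    (hwy : G.Adj w y) (n : ℕ) :
    Submodule.colon (edgeIdeal K G ^ (n + 1))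
        (Ideal.span {(X w ^ (n + 1) * X y ^ n : MvPolynomial V K)}) =
      Ideal.span (X '' G.neighborSet w) := by
  set ω : V → ℕ := (G.neighborSet w).indicator 1
  have hf : (X w ^ (n + 1) * X y ^ n : MvPolynomial V K) =
      monomial (single w (n + 1) + single y n) 1 := by
    simp [X_pow_eq_monomial, monomial_mul]
  have hωf : 1 + weight ω (single w (n + 1) + single y n) = (n + 1) * 1 := by
    simp [ω, weight_single, hwy, add_comm]
  have hω : ∀ i j, G.Adj i j → 1 ≤ ω i + ω j := fun i j hij => by
    rcases hcover hij with hi | hj <;> simp [ω, *]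
  refine le_antisymm (fun h hh => ?_) (Ideal.span_le.2 ?_)
  · rw [Ideal.mem_colon_span_singleton, hf] at hh
    have hpow := pow_le_weightGeIdeal (edgeIdeal_le_weightGeIdeal G hω) (n + 1) hh
    rw [← hωf] at hpow
    exact weightGeIdeal_indicator_one_le _ (mem_weightGeIdeal_of_mul_monomial_mem hpow)
  · rintro _ ⟨j, hj, rfl⟩
    rw [SetLike.mem_coe, Ideal.mem_colon_span_singleton, pow_succ']
    have : (X j * (X w ^ (n + 1) * X y ^ n) : MvPolynomial V K) =
        (X j * X w) * (X w * X y) ^ n := by ring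
    rw [this]
    exact Ideal.mul_mem_mul (X_mul_X_mem_edgeIdeal G (G.adj_symm hj))
      (Ideal.pow_mem_pow (X_mul_X_mem_edgeIdeal G hwy) n)

end EdgeIdeal

theorem vNumber_pow_edgeIdeal_of_vNumber_one_general {K : Type*} [Field K] {V : Type*}
    (G : SimpleGraph V) (hedge : ∃ u v, G.Adj u v)
    (hv : vNumber (edgeIdeal K G) = 1) :
    ∀ n, 1 ≤ n → vNumber ((edgeIdeal K G) ^ (n + 1)) = 2 * n + 1 := by
  intro n _
  obtain ⟨a, b, hab⟩ := hedge
  obtain ⟨g, hg, hgP⟩ := exists_isHomogeneous_vNumber (hv ▸ one_ne_zero)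
  rw [hv] at hg
  rw [colon_span_singleton_mem_associatedPrimes_iff] at hgP
  obtain ⟨w, hw⟩ := hg.exists_coeff_single_ne_zero (ne_zero_of_isPrime_colon hgP)
  have hcover := isVertexCover_neighborSet_of_isPrime_colon G hgP hw
  obtain ⟨y, hwy⟩ : ∃ y, G.Adj w y := (hcover hab).elim (⟨a, ·⟩) (⟨b, ·⟩)
  have hf : (X w ^ (n + 1) * X y ^ n : MvPolynomial V K).IsHomogeneous (2 * n + 1) := by
    convert (isHomogeneous_X_pow w (n + 1)).mul (isHomogeneous_X_pow y n) using 1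
    ring
  refine vNumber_eq_of_forall_le _ hf ?_ fun k f hf hfP => ?_
  · rw [colon_span_singleton_mem_associatedPrimes_iff,
      colon_edgeIdeal_pow_X_pow_mul_X_pow G hcover hwy]
    exact isPrime_span_X_image _
  · have := two_mul_le_of_isPrime_colon_edgeIdeal_pow G hab hf
      (colon_span_singleton_mem_associatedPrimes_iff.1 hfP)
    omega

/-- if the edge ideal I has v(I) = 1, then v(I^{n+1}) = 2n + 1 for all n ≥ 1. -/
theorem vNumber_pow_edgeIdeal_of_vNumber_one {K : Type*} [Field K] {V : Type*} [Fintype V]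
    (G : SimpleGraph V) (hedge : ∃ u v, G.Adj u v)
    (hv : vNumber (edgeIdeal K G) = 1) :
    ∀ n, 1 ≤ n → vNumber ((edgeIdeal K G) ^ (n + 1)) = 2 * n + 1 :=
  vNumber_pow_edgeIdeal_of_vNumber_one_general G hedge hv
end
end
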